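/- arXiv:1511.00136 — 2 statements merged into one kernel-verified Lean document; each statement's English description precedes it below -/
import Mathlib

section
/- Let n ≥ 2. The assignment (i, i+1) ↦ ρ_i determines a well-defined group homomorphism s : S_n → UVB_n which is a section of ι (that is, ι ∘ s = id_{S_n}), and UVB_n is the internal semidirect product of the normal subgroup UVP_n by the subgroup s(S_n). In particular UVB_n is isomorphic to the semidirect product UVP_n ⋊ S_n, where S_n acts by permuting the indices of the generators λ_{i,j} of UVP_n. -/
/-!  Common setup: the unrestricted virtual braid group `UVB n`, its generators
σ_k, ρ_k (1-based indices), the elements λ_{i,j} and B_{i,j}, the permutation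
homomorphism ι (characterized by `IsIota`), the section s : S_n → UVB n
(characterized by `IsPermSection`), and fused Markov equivalence. -/

/-- Generators of the unrestricted virtual braid group `UVB n`:
`Sum.inl i` is the classical generator σ_{i+1} and `Sum.inr i` is the virtual
generator ρ_{i+1}, for `i : Fin (n-1)` (so the 1-based indices are `1, …, n-1`). -/
abbrev UVBGen (n : ℕ) := Sum (Fin (n - 1)) (Fin (n - 1))

namespace UVBGen
def sg {n : ℕ} (i : Fin (n - 1)) : FreeGroup (UVBGen n) := FreeGroup.of (Sum.inl i)
def rg {n : ℕ} (i : Fin (n - 1)) : FreeGroup (UVBGen n) := FreeGroup.of (Sum.inr i)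
end UVBGen

open UVBGen in
/-- The defining relations of the unrestricted virtual braid group. -/
def uvbRels (n : ℕ) : Set (FreeGroup (UVBGen n)) :=
  {r | (∃ i j : Fin (n - 1), (j : ℕ) = (i : ℕ) + 1 ∧
          (r = sg i * sg j * sg i * (sg j * sg i * sg j)⁻¹ ∨
           r = rg i * rg j * rg i * (rg j * rg i * rg j)⁻¹ ∨
           r = rg i * rg j * sg i * (sg j * rg i * rg j)⁻¹ ∨
           r = rg i * sg j * sg i * (sg j * sg i * rg j)⁻¹ ∨
           r = rg j * sg i * sg j * (sg i * sg j * rg i)⁻¹)) ∨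
       (∃ i j : Fin (n - 1), ((i : ℕ) + 2 ≤ (j : ℕ) ∨ (j : ℕ) + 2 ≤ (i : ℕ)) ∧
          (r = sg i * sg j * (sg j * sg i)⁻¹ ∨
           r = rg i * rg j * (rg j * rg i)⁻¹ ∨
           r = sg i * rg j * (rg j * sg i)⁻¹)) ∨
       (∃ i : Fin (n - 1), r = rg i * rg i)}

/-- The unrestricted virtual braid group on `n` strands. -/
abbrev UVB (n : ℕ) := PresentedGroup (uvbRels n)

namespace UVB

/-- The generator σ_k (1-based index; meaningful for `1 ≤ k ≤ n-1`, junk value `1` otherwise). -/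
def sigma (n k : ℕ) : UVB n :=
  if h : 1 ≤ k ∧ k ≤ n - 1 then PresentedGroup.of (Sum.inl ⟨k - 1, by omega⟩) else 1

/-- The generator ρ_k (1-based index; meaningful for `1 ≤ k ≤ n-1`, junk value `1` otherwise). -/
def rho (n k : ℕ) : UVB n :=
  if h : 1 ≤ k ∧ k ≤ n - 1 then PresentedGroup.of (Sum.inr ⟨k - 1, by omega⟩) else 1

/-- The element λ_{i,j} of `UVB n` (1-based indices `1 ≤ i ≠ j ≤ n`; junk value `1` if `i = j`).
For `i < j`:  `λ_{i,j} = ρ_{j-1}⋯ρ_{i+1} · ρ_i σ_i⁻¹ · ρ_{i+1}⋯ρ_{j-1}` and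
`λ_{j,i} = ρ_{j-1}⋯ρ_{i+1} · σ_i⁻¹ ρ_i · ρ_{i+1}⋯ρ_{j-1}`. -/
def lam (n i j : ℕ) : UVB n :=
  if i < j then
    (((List.range' (i + 1) (j - 1 - i)).reverse.map (rho n)).prod) *
      (rho n i * (sigma n i)⁻¹) *
      (((List.range' (i + 1) (j - 1 - i)).map (rho n)).prod)
  else if j < i then
    (((List.range' (j + 1) (i - 1 - j)).reverse.map (rho n)).prod) *
      ((sigma n j)⁻¹ * rho n j) *
      (((List.range' (j + 1) (i - 1 - j)).map (rho n)).prod)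
  else 1

/-- The element `B_{i,j} = ρ_{j-1}ρ_{j-2}⋯ρ_{i+1}ρ_i` for `i < j`, and `1` otherwise. -/
def B (n i j : ℕ) : UVB n :=
  if i < j then ((List.range' i (j - i)).reverse.map (rho n)).prod else 1

/-- The subgroup `U_j` of `UVB n` generated by `{λ_{i,j}, λ_{j,i} : 1 ≤ i < j}`. -/
def U (n j : ℕ) : Subgroup (UVB n) :=
  Subgroup.closure {x | ∃ i, 1 ≤ i ∧ i < j ∧ (x = lam n i j ∨ x = lam n j i)}

end UVB

/-- `ι : UVB n →* S_n` is the homomorphism sending σ_k and ρ_k to the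
transposition (k, k+1) (written 0-based on `Fin n`). -/
def IsIota (n : ℕ) (ι : UVB n →* Equiv.Perm (Fin n)) : Prop :=
  ∀ (k : ℕ) (h1 : 1 ≤ k) (h2 : k ≤ n - 1),
    ι (UVB.sigma n k) = Equiv.swap ⟨k - 1, by omega⟩ ⟨k, by omega⟩ ∧
    ι (UVB.rho n k) = Equiv.swap ⟨k - 1, by omega⟩ ⟨k, by omega⟩

/-- `s : S_n →* UVB n` is the homomorphism sending the transposition (k, k+1) to ρ_k. -/
def IsPermSection (n : ℕ) (s : Equiv.Perm (Fin n) →* UVB n) : Prop :=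
  ∀ (k : ℕ) (h1 : 1 ≤ k) (h2 : k ≤ n - 1),
    s (Equiv.swap ⟨k - 1, by omega⟩ ⟨k, by omega⟩) = UVB.rho n k

/-- The number of orbits of a permutation of `Fin n`
(= number of fixed points + number of nontrivial cycles). -/
def numOrbits {n : ℕ} (π : Equiv.Perm (Fin n)) : ℕ :=
  (Finset.univ.filter fun x => π x = x).card + π.cycleType.card

namespace UVB

private def embedGen (n : ℕ) : UVBGen n → UVBGen (n + 1)
  | Sum.inl i => Sum.inl ⟨i.val, by have := i.isLt; omega⟩
  | Sum.inr i => Sum.inr ⟨i.val, by have := i.isLt; omega⟩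

open UVBGen in
/-- The natural inclusion `UVB n →* UVB (n+1)` (σ_k ↦ σ_k, ρ_k ↦ ρ_k). -/
def incl (n : ℕ) : UVB n →* UVB (n + 1) :=
  PresentedGroup.toGroup (f := fun x => PresentedGroup.of (embedGen n x)) (by
    have key : (FreeGroup.lift fun x => (PresentedGroup.of (embedGen n x) : UVB (n + 1)))
        = (PresentedGroup.mk (uvbRels (n + 1))).comp (FreeGroup.map (embedGen n)) := by
      ext x
      simp [PresentedGroup.of]
    intro r hr
    rw [key]
    simp only [MonoidHom.comp_apply]
    have hmem : FreeGroup.map (embedGen n) r ∈ uvbRels (n + 1) := by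
      have hsg : ∀ i : Fin (n - 1), FreeGroup.map (embedGen n) (sg i)
          = sg (⟨i.val, by have := i.isLt; omega⟩ : Fin (n + 1 - 1)) := by
        intro i; simp [sg, embedGen]
      have hrg : ∀ i : Fin (n - 1), FreeGroup.map (embedGen n) (rg i)
          = rg (⟨i.val, by have := i.isLt; omega⟩ : Fin (n + 1 - 1)) := by
        intro i; simp [rg, embedGen]
      rcases hr with ⟨i, j, hij, hc⟩ | ⟨i, j, hij, hc⟩ | ⟨i, hc⟩
      · refine Or.inl ⟨⟨i.val, by have := i.isLt; omega⟩, ⟨j.val, by have := j.isLt; omega⟩,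
          by simpa using hij, ?_⟩
        rcases hc with h | h | h | h | h <;> subst h <;>
          simp only [map_mul, map_inv, hsg, hrg] <;> tauto
      · refine Or.inr (Or.inl ⟨⟨i.val, by have := i.isLt; omega⟩, ⟨j.val, by have := j.isLt; omega⟩,
          by simpa using hij, ?_⟩)
        rcases hc with h | h | h <;> subst h <;>
          simp only [map_mul, map_inv, hsg, hrg] <;> tauto
      · refine Or.inr (Or.inr ⟨⟨i.val, by have := i.isLt; omega⟩, ?_⟩)
        subst hc
        simp only [map_mul, hsg, hrg]
    exact (QuotientGroup.eq_one_iff _).mpr (Subgroup.subset_normalClosure hmem))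

end UVB

/-- The elementary fused Markov moves on the disjoint union of the groups `UVB n`:
conjugation, and the three right stabilizations (positive, negative, virtual). -/
inductive MarkovBase : (Σ n, UVB n) → (Σ n, UVB n) → Prop
  | conj (n : ℕ) (α γ : UVB n) : MarkovBase ⟨n, α⟩ ⟨n, γ * α * γ⁻¹⟩
  | stabPos (n : ℕ) (α : UVB n) :
      MarkovBase ⟨n, α⟩ ⟨n + 1, UVB.incl n α * UVB.sigma (n + 1) n⟩
  | stabNeg (n : ℕ) (α : UVB n) :
      MarkovBase ⟨n, α⟩ ⟨n + 1, UVB.incl n α * (UVB.sigma (n + 1) n)⁻¹⟩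
  | stabVirt (n : ℕ) (α : UVB n) :
      MarkovBase ⟨n, α⟩ ⟨n + 1, UVB.incl n α * UVB.rho (n + 1) n⟩

/-- Fused Markov equivalence: the smallest equivalence relation generated by the
elementary Markov moves.  By Kamada's theorem, two unrestricted virtual braids are
fused Markov equivalent iff their closures are equivalent fused links. -/
def Markov : (Σ n, UVB n) → (Σ n, UVB n) → Prop := Relation.EqvGen MarkovBase

/-! The virtual generators `ρ_1, …, ρ_{n-1}` satisfy the Coxeter relations of type `A_{n-1}`, so
by the Coxeter presentation of `S_n` (proved through the normal form
`π = π' · τ_{m-1} ⋯ τ_p`, `p = π⁻¹ m`) they define `s : S_n → UVB_n` with `ι ∘ s = id`; a split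
surjection exhibits its kernel as a complement of the image of the splitting.

For the action: every `λ_{i,j}` is `s ψ · λ_{1,2} · (s ψ)⁻¹` for some `ψ` sending `1, 2` to `i, j`
(induction on `i, j` through the defining relations), and the pointwise stabiliser of `1, 2` is
generated by the `τ_k` with `k ≥ 3`, whose images `ρ_k` commute with `σ_1` and `ρ_1`. Hence
`s π · λ_{i,j} · (s π)⁻¹` depends only on `π i, π j`, and equals `λ_{π i, π j}`. -/

open Equiv

lemma MonoidHom.isComplement'_ker_range {G H : Type*} [Group G] [Group H] {f : G →* H}
    {s : H →* G} (hfs : f.comp s = MonoidHom.id H) : f.ker.IsComplement' s.range := by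
  have hfs' : ∀ x, f (s x) = x := DFunLike.congr_fun hfs
  refine Subgroup.isComplement'_of_disjoint_and_mul_eq_univ ?_ ?_
  · rw [Subgroup.disjoint_def]
    rintro _ hx ⟨y, rfl⟩
    rw [MonoidHom.mem_ker, hfs'] at hx
    rw [hx, map_one]
  · refine Set.eq_univ_of_forall fun g =>
      ⟨g * (s (f g))⁻¹, ?_, s (f g), ⟨f g, rfl⟩, inv_mul_cancel_right g _⟩
    rw [SetLike.mem_coe, MonoidHom.mem_ker, map_mul, map_inv, hfs', mul_inv_cancel]

section AdjacentSwaps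

def adjSwap (n j : ℕ) : Perm (Fin n) :=
  if h : j + 1 < n then swap ⟨j, by omega⟩ ⟨j + 1, h⟩ else 1

variable {n : ℕ}

lemma adjSwap_of_lt {j : ℕ} (h : j + 1 < n) : adjSwap n j = swap ⟨j, by omega⟩ ⟨j + 1, h⟩ :=
  dif_pos h

lemma adjSwap_of_le {j : ℕ} (h : n ≤ j + 1) : adjSwap n j = 1 :=
  dif_neg (by omega)

lemma adjSwap_apply_val {j : ℕ} (h : j + 1 < n) (x : Fin n) :
    (adjSwap n j x : ℕ) = swap j (j + 1) (x : ℕ) := by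
  rw [adjSwap_of_lt h, swap_apply_def, swap_apply_def]
  split_ifs <;> simp_all [Fin.ext_iff]

lemma adjSwap_mul_self (j : ℕ) : adjSwap n j * adjSwap n j = 1 := by
  unfold adjSwap
  split_ifs
  · exact swap_mul_self _ _
  · exact mul_one 1

lemma adjSwap_commute {j k : ℕ} (h : j + 2 ≤ k) : Commute (adjSwap n j) (adjSwap n k) := by
  rcases lt_or_ge (k + 1) n with hk | hk
  · ext x
    simp only [Perm.mul_apply, adjSwap_apply_val (show j + 1 < n by omega),
      adjSwap_apply_val hk, swap_apply_def]
    split_ifs <;> omega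
  · rw [adjSwap_of_le hk]
    exact Commute.one_right _

lemma adjSwap_braid {j : ℕ} (h : j + 2 < n) :
    adjSwap n j * adjSwap n (j + 1) * adjSwap n j =
      adjSwap n (j + 1) * adjSwap n j * adjSwap n (j + 1) := by
  ext x
  simp only [Perm.mul_apply, adjSwap_apply_val (show j + 1 < n by omega),
    adjSwap_apply_val h, swap_apply_def]
  split_ifs <;> omega

lemma mclosure_adjSwap (n : ℕ) :
    Submonoid.closure {σ : Perm (Fin n) | ∃ j, j + 1 < n ∧ adjSwap n j = σ} = ⊤ := by
  cases n with
  | zero => exact Subsingleton.elim _ _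
  | succ m =>
    rw [eq_top_iff, ← Perm.mclosure_swap_castSucc_succ m, Submonoid.closure_le]
    rintro _ ⟨i, rfl⟩
    refine Submonoid.subset_closure ⟨i, by omega, ?_⟩
    rw [adjSwap_of_lt (by omega)]
    rfl

open MulAction in
lemma mem_closure_adjSwap_of_forall_lt {c : ℕ} {φ : Perm (Fin n)}
    (hφ : ∀ x : Fin n, (x : ℕ) < c → φ x = x) :
    φ ∈ Subgroup.closure {σ | ∃ k, c ≤ k ∧ k + 1 < n ∧ adjSwap n k = σ} := by
  set S := {σ : Perm (Fin n) | ∃ k, c ≤ k ∧ k + 1 < n ∧ adjSwap n k = σ}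
  have horbit : ∀ v (hcv : c ≤ v) (hv : v < n),
      orbit (Subgroup.closure S) (⟨v, hv⟩ : Fin n) = orbit (Subgroup.closure S) ⟨c, by omega⟩ := by
    intro v hcv
    induction v, hcv using Nat.le_induction with
    | base => exact fun _ => rfl
    | succ v hcv ih =>
      intro hv
      rw [← ih (by omega), orbit_eq_iff, mem_orbit_iff]
      refine ⟨⟨adjSwap n v, Subgroup.subset_closure ⟨v, hcv, hv, rfl⟩⟩, Fin.ext ?_⟩
      rw [Subgroup.mk_smul, Perm.smul_def, adjSwap_apply_val hv, swap_apply_left]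
  refine (mem_closure_isSwap ?_).mpr ⟨Set.toFinite _, fun x => ?_⟩
  · rintro _ ⟨k, -, hk, rfl⟩
    exact ⟨_, _, by simp [Fin.ext_iff], adjSwap_of_lt hk⟩
  by_cases hx : (x : ℕ) < c
  · rw [hφ x hx]
    exact mem_orbit_self x
  · have hφx : c ≤ (φ x : ℕ) := by
      by_contra h
      have hfix : φ (φ x) = φ x := hφ (φ x) (by omega)
      rw [φ.injective hfix] at h
      exact hx (by omega)
    have e1 := horbit _ hφx (φ x).isLt
    have e2 := horbit _ (not_lt.mp hx) x.isLt
    rw [Fin.eta] at e1 e2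
    rw [← orbit_eq_iff, e1, e2]

end AdjacentSwaps

section DescendingProducts

variable {G : Type*} [Group G] (r : ℕ → G)

def descProd (a b : ℕ) : G := ((List.range' a (b - a)).reverse.map r).prod

lemma descProd_of_le {a b : ℕ} (h : b ≤ a) : descProd r a b = 1 := by
  simp [descProd, Nat.sub_eq_zero_of_le h]

lemma descProd_succ {a b : ℕ} (h : a ≤ b) : descProd r a (b + 1) = r b * descProd r a b := by
  rw [descProd, descProd, show b + 1 - a = b - a + 1 by omega, List.range'_concat]
  simp [show a + (b - a) = b by omega]

lemma descProd_eq_mul {a b : ℕ} (h : a < b) : descProd r a b = descProd r (a + 1) b * r a := by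
  rw [descProd, descProd, show b - a = b - (a + 1) + 1 by omega, List.range'_succ]
  simp

lemma commute_descProd {g : G} {a b : ℕ} (h : ∀ x, a ≤ x → x < b → Commute g (r x)) :
    Commute g (descProd r a b) := by
  refine Commute.list_prod_right _ _ fun y hy => ?_
  obtain ⟨x, hx, rfl⟩ := List.mem_map.mp hy
  rw [List.mem_reverse, List.mem_range'_1] at hx
  exact h x hx.1 (by omega)

lemma mul_descProd_of_braid {a b t : ℕ}
    (hcomm : ∀ j k, j + 2 ≤ k → k < b → Commute (r j) (r k))
    (hbraid : r t * r (t + 1) * r t = r (t + 1) * r t * r (t + 1))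
    (hat : a ≤ t) (htb : t + 2 ≤ b) :
    r t * descProd r a b = descProd r a b * r (t + 1) := by
  induction b, htb using Nat.le_induction with
  | base =>
    have hc : Commute (r (t + 1)) (descProd r a t) :=
      commute_descProd r fun x _ hx => (hcomm x (t + 1) (by omega) (by omega)).symm
    rw [descProd_succ r (by omega), descProd_succ r hat]
    calc r t * (r (t + 1) * (r t * descProd r a t))
        = r (t + 1) * r t * (r (t + 1) * descProd r a t) := by
          rw [← mul_assoc, ← mul_assoc, ← mul_assoc, hbraid, mul_assoc]
      _ = r (t + 1) * (r t * descProd r a t) * r (t + 1) := by rw [hc.eq]; group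
  | succ b hb ih =>
    rw [descProd_succ r (by omega), ← mul_assoc,
      (hcomm t b hb (by omega)).eq, mul_assoc, ih fun j k hjk hk => hcomm j k hjk (by omega),
      mul_assoc]

end DescendingProducts

section CoxeterLift

variable {G : Type*} [Group G] {n : ℕ}

structure IsCoxeterA (n : ℕ) (r : ℕ → G) : Prop where
  mul_self : ∀ j, j + 1 < n → r j * r j = 1
  commute : ∀ j k, j + 2 ≤ k → k + 1 < n → Commute (r j) (r k)
  braid : ∀ j, j + 2 < n → r j * r (j + 1) * r j = r (j + 1) * r j * r (j + 1)

lemma isCoxeterA_adjSwap (n : ℕ) : IsCoxeterA n (adjSwap n) :=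
  ⟨fun j _ => adjSwap_mul_self j, fun _ _ h _ => adjSwap_commute h, fun _ => adjSwap_braid⟩

lemma IsCoxeterA.mul_descProd {r : ℕ → G} (hr : IsCoxeterA n r) {a b t : ℕ}
    (hb : b < n) (hat : a ≤ t) (htb : t + 2 ≤ b) :
    r t * descProd r a b = descProd r a b * r (t + 1) :=
  mul_descProd_of_braid r (fun j k hjk hk => hr.commute j k hjk (by omega))
    (hr.braid t (by omega)) hat htb

lemma descProd_adjSwap_apply_of_lt_or_lt {p m : ℕ} {x : Fin n} (hx : x < p ∨ m < x) :
    descProd (adjSwap n) p m x = x := by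
  induction m with
  | zero => rw [descProd_of_le _ (Nat.zero_le p)]; rfl
  | succ m ih =>
    rcases le_or_gt p m with hpm | hpm
    · rw [descProd_succ _ hpm, Perm.mul_apply, ih (by omega)]
      rcases lt_or_ge (m + 1) n with hm | hm
      · exact Fin.ext <| by rw [adjSwap_apply_val hm, swap_apply_of_ne_of_ne] <;> omega
      · rw [adjSwap_of_le hm]; rfl
    · rw [descProd_of_le _ (by omega)]; rfl

lemma descProd_adjSwap_apply_self {x : Fin n} {m : ℕ} (hxm : (x : ℕ) ≤ m) (hm : m < n) :
    descProd (adjSwap n) x m x = ⟨m, hm⟩ := by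
  induction m, hxm using Nat.le_induction with
  | base => rw [descProd_of_le _ le_rfl]; rfl
  | succ m hxm ih =>
    rw [descProd_succ _ hxm, Perm.mul_apply, ih (by omega)]
    exact Fin.ext <| by rw [adjSwap_apply_val hm, swap_apply_left]

def FixesFrom (m : ℕ) (π : Perm (Fin n)) : Prop :=
  ∀ x : Fin n, m ≤ x → π x = x

lemma FixesFrom.inv_apply_le {m : ℕ} {π : Perm (Fin n)} (hπ : FixesFrom (m + 1) π)
    (hm : m < n) : (π⁻¹ ⟨m, hm⟩ : ℕ) ≤ m := by
  by_contra! h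
  have h' := hπ _ h
  rw [show π (π⁻¹ ⟨m, hm⟩) = ⟨m, hm⟩ from π.apply_symm_apply _] at h'
  exact h.ne (congrArg Fin.val h')

/-- With `p = π⁻¹ m`, the cycle `τ_{m-1} ⋯ τ_p` carries `p` to `m`, so composing `π` with its
inverse fixes `m`. -/
lemma FixesFrom.mul_inv_descProd {m : ℕ} {π : Perm (Fin n)} (hπ : FixesFrom (m + 1) π)
    (hm : m < n) : FixesFrom m (π * (descProd (adjSwap n) (π⁻¹ ⟨m, hm⟩) m)⁻¹) := by
  intro x hx
  rw [Perm.mul_apply]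
  rcases eq_or_lt_of_le hx with hxm | hxm
  · obtain rfl : x = ⟨m, hm⟩ := Fin.ext hxm.symm
    rw [Perm.inv_eq_iff_eq.mpr (descProd_adjSwap_apply_self (hπ.inv_apply_le hm) hm).symm]
    exact π.apply_symm_apply _
  · rw [Perm.inv_eq_iff_eq.mpr (descProd_adjSwap_apply_of_lt_or_lt (Or.inr hxm)).symm]
    exact hπ x hxm

variable (r : ℕ → G)

/-- The image of `π` under the would-be homomorphism `τ_j ↦ r j`, computed from the normal form
`π = π' * (τ_{m-1} ⋯ τ_p)` where `p = π⁻¹ m` and `π'` fixes `m`. -/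
def coxeterWord : ℕ → Perm (Fin n) → G
  | 0, _ => 1
  | m + 1, π =>
    if h : m < n then
      coxeterWord m (π * (descProd (adjSwap n) (π⁻¹ ⟨m, h⟩) m)⁻¹) * descProd r (π⁻¹ ⟨m, h⟩) m
    else 1

lemma coxeterWord_succ {m : ℕ} (hm : m < n) (π : Perm (Fin n)) {p : ℕ}
    (hp : (π⁻¹ ⟨m, hm⟩ : ℕ) = p) :
    coxeterWord r (m + 1) π =
      coxeterWord r m (π * (descProd (adjSwap n) p m)⁻¹) * descProd r p m := by
  rw [coxeterWord, dif_pos hm, hp]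

lemma coxeterWord_one (m : ℕ) : coxeterWord (n := n) r m 1 = 1 := by
  induction m with
  | zero => rfl
  | succ m ih =>
    rw [coxeterWord]
    split_ifs
    · simp [descProd_of_le, ih]
    · rfl

variable {r}

lemma coxeterWord_succ_mul_adjSwap (hr : IsCoxeterA n r) {m : ℕ} (hm : m < n)
    (ih : ∀ π : Perm (Fin n), FixesFrom m π → ∀ j, j + 1 < m →
      coxeterWord r m (π * adjSwap n j) = coxeterWord r m π * r j)
    {π : Perm (Fin n)} (hπ : FixesFrom (m + 1) π) {j : ℕ} (hj : j + 1 < m + 1) :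
    coxeterWord r (m + 1) (π * adjSwap n j) = coxeterWord r (m + 1) π * r j := by
  obtain ⟨p, hp⟩ : ∃ p, (π⁻¹ ⟨m, hm⟩ : ℕ) = p := ⟨_, rfl⟩
  have hpm : p ≤ m := hp ▸ hπ.inv_apply_le hm
  have hfix := hπ.mul_inv_descProd hm
  rw [hp] at hfix
  have hτ : (adjSwap n j)⁻¹ = adjSwap n j := inv_eq_of_mul_eq_one_right (adjSwap_mul_self j)
  have hq : ((π * adjSwap n j)⁻¹ ⟨m, hm⟩ : ℕ) = swap j (j + 1) p := by
    rw [mul_inv_rev, Perm.mul_apply, hτ, adjSwap_apply_val (by omega), hp]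
  rw [coxeterWord_succ r hm π hp, coxeterWord_succ r hm _ hq]
  -- If `p ∈ {j, j + 1}`, `τ_j` is absorbed into the cycle `τ_{m-1} ⋯ τ_p`; otherwise it slides
  -- through it, its index dropping by one when `p < j`, and induction applies.
  rcases (show p = j ∨ p = j + 1 ∨ j + 2 ≤ p ∨ p < j by omega) with rfl | rfl | hjp | hpj
  · rw [swap_apply_left, descProd_eq_mul (adjSwap n) (show p < m by omega),
      descProd_eq_mul r (show p < m by omega), mul_inv_rev, hτ]
    simp only [mul_assoc, hr.mul_self p (by omega), mul_one]
  · rw [swap_apply_right, descProd_eq_mul (adjSwap n) (show j < m by omega),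
      descProd_eq_mul r (show j < m by omega), mul_inv_rev, hτ, mul_assoc π,
      ← mul_assoc (adjSwap n j), adjSwap_mul_self, one_mul, mul_assoc]
  · rw [swap_apply_of_ne_of_ne (by omega) (by omega)]
    have hc : Commute (adjSwap n j) (descProd (adjSwap n) p m)⁻¹ :=
      (commute_descProd _ fun x _ _ => adjSwap_commute (by omega)).inv_right
    have hcr : Commute (r j) (descProd r p m) :=
      commute_descProd _ fun x hx hxm => hr.commute j x (by omega) (by omega)
    rw [mul_assoc π, hc.eq, ← mul_assoc, ih _ hfix j (by omega), mul_assoc, hcr.eq, mul_assoc]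
  · rw [swap_apply_of_ne_of_ne (by omega) (by omega)]
    obtain ⟨i, rfl⟩ : ∃ i, j = i + 1 := ⟨j - 1, by omega⟩
    have hpush : adjSwap n (i + 1) * (descProd (adjSwap n) p m)⁻¹ =
        (descProd (adjSwap n) p m)⁻¹ * adjSwap n i := by
      rw [mul_inv_eq_iff_eq_mul, mul_assoc, (isCoxeterA_adjSwap n).mul_descProd hm
        (by omega) (by omega), ← mul_assoc, inv_mul_cancel, one_mul]
    rw [mul_assoc π, hpush, ← mul_assoc, ih _ hfix i (by omega), mul_assoc,
      hr.mul_descProd hm (by omega) (by omega), mul_assoc]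

lemma coxeterWord_mul_adjSwap (hr : IsCoxeterA n r) {π : Perm (Fin n)} {j : ℕ}
    (hj : j + 1 < n) : coxeterWord r n (π * adjSwap n j) = coxeterWord r n π * r j := by
  suffices ∀ m ≤ n, ∀ π : Perm (Fin n), FixesFrom m π → ∀ j, j + 1 < m →
      coxeterWord r m (π * adjSwap n j) = coxeterWord r m π * r j from
    this n le_rfl π (fun x hx => absurd x.isLt (by omega)) j hj
  intro m
  induction m with
  | zero => intro _ _ _ j hj; omega
  | succ m ih =>
    intro hm π hπ j hj
    exact coxeterWord_succ_mul_adjSwap hr (by omega) (ih (by omega)) hπ hj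

lemma coxeterWord_adjSwap (hr : IsCoxeterA n r) {j : ℕ} (hj : j + 1 < n) :
    coxeterWord r n (adjSwap n j) = r j := by
  rw [← one_mul (adjSwap n j), coxeterWord_mul_adjSwap hr hj, coxeterWord_one, one_mul]

lemma coxeterWord_mul (hr : IsCoxeterA n r) (a b : Perm (Fin n)) :
    coxeterWord r n (a * b) = coxeterWord r n a * coxeterWord r n b := by
  have hb : b ∈ Submonoid.closure {σ | ∃ j, j + 1 < n ∧ adjSwap n j = σ} := by
    rw [mclosure_adjSwap]; trivial
  induction hb using Submonoid.closure_induction generalizing a with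
  | mem σ hσ =>
    obtain ⟨j, hj, rfl⟩ := hσ
    rw [coxeterWord_mul_adjSwap hr hj, coxeterWord_adjSwap hr hj]
  | one => rw [mul_one, coxeterWord_one, mul_one]
  | mul σ τ _ _ ihσ ihτ => rw [← mul_assoc, ihτ, ihσ, ihτ σ, mul_assoc]

/-- The Coxeter presentation of `S_n`. -/
def IsCoxeterA.lift (hr : IsCoxeterA n r) : Perm (Fin n) →* G :=
  MonoidHom.mk' (coxeterWord r n) (coxeterWord_mul hr)

lemma IsCoxeterA.lift_adjSwap (hr : IsCoxeterA n r) {j : ℕ} (hj : j + 1 < n) :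
    hr.lift (adjSwap n j) = r j :=
  coxeterWord_adjSwap hr hj

end CoxeterLift

namespace UVB

variable {n : ℕ}

lemma rho_succ {k : ℕ} (hk : k + 1 < n) :
    rho n (k + 1) = PresentedGroup.of (Sum.inr ⟨k, by omega⟩) :=
  dif_pos ⟨by omega, by omega⟩

lemma sigma_succ {k : ℕ} (hk : k + 1 < n) :
    sigma n (k + 1) = PresentedGroup.of (Sum.inl ⟨k, by omega⟩) :=
  dif_pos ⟨by omega, by omega⟩

lemma rho_mul_self {k : ℕ} (hk : k + 1 < n) : rho n (k + 1) * rho n (k + 1) = 1 := by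
  rw [rho_succ hk]
  exact PresentedGroup.one_of_mem (Or.inr (Or.inr ⟨⟨k, by omega⟩, rfl⟩))

lemma rho_inv {k : ℕ} (hk : k + 1 < n) : (rho n (k + 1))⁻¹ = rho n (k + 1) :=
  inv_eq_of_mul_eq_one_right (rho_mul_self hk)

lemma rho_braid {k : ℕ} (hk : k + 2 < n) :
    rho n (k + 1) * rho n (k + 2) * rho n (k + 1) =
      rho n (k + 2) * rho n (k + 1) * rho n (k + 2) := by
  rw [rho_succ (show k + 1 < n by omega), rho_succ hk]
  exact PresentedGroup.mk_eq_mk_of_mul_inv_mem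
    (Or.inl ⟨⟨k, by omega⟩, ⟨k + 1, by omega⟩, rfl, Or.inr (Or.inl rfl)⟩)

lemma rho_rho_sigma {k : ℕ} (hk : k + 2 < n) :
    rho n (k + 1) * rho n (k + 2) * sigma n (k + 1) =
      sigma n (k + 2) * rho n (k + 1) * rho n (k + 2) := by
  rw [rho_succ (show k + 1 < n by omega), rho_succ hk, sigma_succ (show k + 1 < n by omega),
    sigma_succ hk]
  exact PresentedGroup.mk_eq_mk_of_mul_inv_mem
    (Or.inl ⟨⟨k, by omega⟩, ⟨k + 1, by omega⟩, rfl, Or.inr (Or.inr (Or.inl rfl))⟩)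

lemma rho_commute {j k : ℕ} (hjk : j + 2 ≤ k) (hk : k + 1 < n) :
    Commute (rho n (j + 1)) (rho n (k + 1)) := by
  rw [rho_succ (show j + 1 < n by omega), rho_succ hk]
  exact PresentedGroup.mk_eq_mk_of_mul_inv_mem
    (Or.inr (Or.inl ⟨⟨j, by omega⟩, ⟨k, by omega⟩, Or.inl hjk, Or.inr (Or.inl rfl)⟩))

lemma sigma_commute_rho {j k : ℕ} (hjk : j + 2 ≤ k) (hk : k + 1 < n) :
    Commute (sigma n (j + 1)) (rho n (k + 1)) := by
  rw [sigma_succ (show j + 1 < n by omega), rho_succ hk]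
  exact PresentedGroup.mk_eq_mk_of_mul_inv_mem
    (Or.inr (Or.inl ⟨⟨j, by omega⟩, ⟨k, by omega⟩, Or.inl hjk, Or.inr (Or.inr rfl)⟩))

lemma isCoxeterA_rho (n : ℕ) : IsCoxeterA n (fun k => rho n (k + 1)) :=
  ⟨fun _ => rho_mul_self, fun _ _ => rho_commute, fun _ => rho_braid⟩

def permSection (n : ℕ) : Perm (Fin n) →* UVB n := (isCoxeterA_rho n).lift

lemma permSection_adjSwap {k : ℕ} (hk : k + 1 < n) :
    permSection n (adjSwap n k) = rho n (k + 1) :=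
  (isCoxeterA_rho n).lift_adjSwap hk

lemma lam_self_succ (i : ℕ) : lam n i (i + 1) = rho n i * (sigma n i)⁻¹ := by
  simp [lam]

lemma lam_succ_self (i : ℕ) : lam n (i + 1) i = (sigma n i)⁻¹ * rho n i := by
  simp [lam]

lemma lam_succ_right {i j : ℕ} (hij : i < j) :
    lam n i (j + 1) = rho n j * lam n i j * rho n j := by
  rw [lam, lam, if_pos hij, if_pos (show i < j + 1 by omega),
    show j + 1 - 1 - i = j - 1 - i + 1 by omega, List.range'_concat,
    show i + 1 + 1 * (j - 1 - i) = j by omega]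
  simp [mul_assoc]

lemma lam_succ_left {i j : ℕ} (hij : i < j) :
    lam n (j + 1) i = rho n j * lam n j i * rho n j := by
  rw [lam, lam, if_neg (show ¬j + 1 < i by omega), if_pos (show i < j + 1 by omega),
    if_neg (show ¬j < i by omega), if_pos hij, show j + 1 - 1 - i = j - 1 - i + 1 by omega,
    List.range'_concat, show i + 1 + 1 * (j - 1 - i) = j by omega]
  simp [mul_assoc]

lemma lam_succ_succ_self {i : ℕ} (hi : i + 1 < n) :
    lam n (i + 2) (i + 1) = rho n (i + 1) * lam n (i + 1) (i + 2) * rho n (i + 1) := by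
  rw [lam_succ_self, lam_self_succ, ← mul_assoc, rho_mul_self hi, one_mul]

/-- Uses the mixed relation `ρ_i ρ_{i+1} σ_i = σ_{i+1} ρ_i ρ_{i+1}`. -/
lemma lam_shift {i : ℕ} (hi : i + 2 < n) :
    lam n (i + 2) (i + 3) = rho n (i + 1) * lam n (i + 1) (i + 3) * rho n (i + 1) := by
  have hsigma : sigma n (i + 2) =
      rho n (i + 1) * rho n (i + 2) * sigma n (i + 1) * (rho n (i + 1) * rho n (i + 2))⁻¹ :=
    eq_mul_inv_of_mul_eq (by rw [← mul_assoc, rho_rho_sigma hi])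
  have hinv : (rho n (i + 1) * rho n (i + 2))⁻¹ = rho n (i + 2) * rho n (i + 1) := by
    rw [mul_inv_rev, rho_inv hi, rho_inv (show i + 1 < n by omega)]
  rw [lam_self_succ (i + 2), lam_succ_right (show i + 1 < i + 2 by omega), lam_self_succ (i + 1),
    hsigma]
  calc rho n (i + 2) * (rho n (i + 1) * rho n (i + 2) * sigma n (i + 1) *
        (rho n (i + 1) * rho n (i + 2))⁻¹)⁻¹
      = rho n (i + 2) * rho n (i + 1) * rho n (i + 2) * (sigma n (i + 1))⁻¹ *
          (rho n (i + 1) * rho n (i + 2))⁻¹ := by group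
    _ = rho n (i + 1) * rho n (i + 2) * rho n (i + 1) * (sigma n (i + 1))⁻¹ *
          (rho n (i + 1) * rho n (i + 2))⁻¹ := by rw [rho_braid hi]
    _ = rho n (i + 1) * (rho n (i + 2) * (rho n (i + 1) * (sigma n (i + 1))⁻¹) *
          rho n (i + 2)) * rho n (i + 1) := by rw [hinv]; group

variable {m : ℕ}

lemma commute_permSection_lam_one_two {φ : Perm (Fin (m + 2))} (h0 : φ 0 = 0)
    (h1 : φ 1 = 1) : Commute (permSection (m + 2) φ) (lam (m + 2) 1 2) := by
  have hφ : φ ∈ Subgroup.closure {σ | ∃ k, 2 ≤ k ∧ k + 1 < m + 2 ∧ adjSwap (m + 2) k = σ} :=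
    mem_closure_adjSwap_of_forall_lt fun x hx => by
      obtain hx | hx : (x : ℕ) = 0 ∨ (x : ℕ) = 1 := by omega
      · rwa [show x = 0 from Fin.ext hx]
      · rwa [show x = 1 from Fin.ext (by simpa using hx)]
  have hle : Subgroup.closure {σ | ∃ k, 2 ≤ k ∧ k + 1 < m + 2 ∧ adjSwap (m + 2) k = σ} ≤
      (Subgroup.centralizer {lam (m + 2) 1 2}).comap (permSection (m + 2)) := by
    rw [Subgroup.closure_le]
    rintro _ ⟨k, hk2, hk, rfl⟩
    rw [SetLike.mem_coe, Subgroup.mem_comap, Subgroup.mem_centralizer_singleton_iff,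
      permSection_adjSwap hk, lam_self_succ]
    exact ((rho_commute (j := 0) hk2 hk).symm.mul_right
      (sigma_commute_rho (j := 0) hk2 hk).symm.inv_right).eq
  exact Subgroup.mem_centralizer_singleton_iff.mp (hle hφ)

/-- `a, b` are 0-based positions in `Fin (m + 2)`, whereas the indices of `lam` are 1-based. -/
def IsBaseConj (m a b : ℕ) : Prop :=
  ∃ ψ : Perm (Fin (m + 2)), (ψ 0 : ℕ) = a ∧ (ψ 1 : ℕ) = b ∧
    lam (m + 2) (a + 1) (b + 1) =
      permSection (m + 2) ψ * lam (m + 2) 1 2 * (permSection (m + 2) ψ)⁻¹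

lemma isBaseConj_zero_one : IsBaseConj m 0 1 :=
  ⟨1, rfl, by simp, by simp⟩

lemma IsBaseConj.of_adjSwap {a b a' b' k : ℕ} (h : IsBaseConj m a b) (hk : k + 1 < m + 2)
    (ha : swap k (k + 1) a = a') (hb : swap k (k + 1) b = b')
    (hconj : lam (m + 2) (a' + 1) (b' + 1) =
      rho (m + 2) (k + 1) * lam (m + 2) (a + 1) (b + 1) * rho (m + 2) (k + 1)) :
    IsBaseConj m a' b' := by
  obtain ⟨ψ, h0, h1, hψ⟩ := h
  refine ⟨adjSwap _ k * ψ, ?_, ?_, ?_⟩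
  · rw [Perm.mul_apply, adjSwap_apply_val hk, h0, ha]
  · rw [Perm.mul_apply, adjSwap_apply_val hk, h1, hb]
  · rw [hconj, hψ, map_mul, permSection_adjSwap hk, mul_inv_rev, rho_inv hk]
    group

lemma isBaseConj_self_succ {a : ℕ} (ha : a + 1 < m + 2) : IsBaseConj m a (a + 1) := by
  induction a with
  | zero => exact isBaseConj_zero_one
  | succ a ih =>
    have h : IsBaseConj m a (a + 2) := (ih (by omega)).of_adjSwap (k := a + 1) ha
      (swap_apply_of_ne_of_ne (by omega) (by omega)) (swap_apply_left _ _)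
      (lam_succ_right (by omega))
    exact h.of_adjSwap (k := a) (by omega) (swap_apply_left _ _)
      (swap_apply_of_ne_of_ne (by omega) (by omega)) (lam_shift (by omega))

lemma isBaseConj_of_lt {a b : ℕ} (hab : a < b) (hb : b < m + 2) : IsBaseConj m a b := by
  induction b, hab using Nat.le_induction with
  | base => exact isBaseConj_self_succ hb
  | succ b hab ih =>
    exact (ih (by omega)).of_adjSwap (k := b) hb (swap_apply_of_ne_of_ne (by omega) (by omega))
      (swap_apply_left _ _) (lam_succ_right (by omega))

lemma isBaseConj_of_gt {a b : ℕ} (hba : b < a) (ha : a < m + 2) : IsBaseConj m a b := by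
  induction a, hba using Nat.le_induction with
  | base =>
    exact (isBaseConj_self_succ ha).of_adjSwap (k := b) ha (swap_apply_left _ _)
      (swap_apply_right _ _) (lam_succ_succ_self (by omega))
  | succ a hba ih =>
    exact (ih (by omega)).of_adjSwap (k := a) ha (swap_apply_left _ _)
      (swap_apply_of_ne_of_ne (by omega) (by omega)) (lam_succ_left (by omega))

lemma isBaseConj {a b : Fin (m + 2)} (hab : a ≠ b) : IsBaseConj m a b := by
  rcases lt_or_gt_of_ne (Fin.val_ne_of_ne hab) with h | h
  · exact isBaseConj_of_lt h b.isLt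
  · exact isBaseConj_of_gt h a.isLt

/-- Two permutations sending `0, 1` to the same pair differ by an element of the stabilizer,
which commutes with `λ_{1,2}`; so conjugating `λ_{1,2}` only depends on that pair. -/
theorem permSection_conj_lam (π : Perm (Fin (m + 2))) {a b : Fin (m + 2)} (hab : a ≠ b) :
    permSection (m + 2) π * lam (m + 2) (a + 1) (b + 1) * (permSection (m + 2) π)⁻¹ =
      lam (m + 2) (π a + 1) (π b + 1) := by
  obtain ⟨ψ, hψ0, hψ1, hψ⟩ := isBaseConj hab
  obtain ⟨χ, hχ0, hχ1, hχ⟩ := isBaseConj (π.injective.ne hab)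
  have hfix : ∀ {x y : Fin (m + 2)}, (ψ x : ℕ) = y → (χ x : ℕ) = π y → (χ⁻¹ * π * ψ) x = x :=
    fun hψx hχx => by
      rw [Perm.mul_apply, Perm.mul_apply, Fin.ext hψx, ← Fin.ext hχx]
      exact χ.symm_apply_apply _
  have hcomm := commute_permSection_lam_one_two (hfix hψ0 hχ0) (hfix hψ1 hχ1)
  have hsplit : permSection (m + 2) π * permSection (m + 2) ψ =
      permSection (m + 2) χ * permSection (m + 2) (χ⁻¹ * π * ψ) := by
    rw [← map_mul, ← map_mul]
    group
  rw [hψ, hχ]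
  calc permSection (m + 2) π * (permSection (m + 2) ψ * lam (m + 2) 1 2 *
        (permSection (m + 2) ψ)⁻¹) * (permSection (m + 2) π)⁻¹
      = permSection (m + 2) π * permSection (m + 2) ψ * lam (m + 2) 1 2 *
          (permSection (m + 2) π * permSection (m + 2) ψ)⁻¹ := by group
    _ = permSection (m + 2) χ * (permSection (m + 2) (χ⁻¹ * π * ψ) * lam (m + 2) 1 2) *
          (permSection (m + 2) (χ⁻¹ * π * ψ))⁻¹ * (permSection (m + 2) χ)⁻¹ := by
        rw [hsplit]; group
    _ = permSection (m + 2) χ * lam (m + 2) 1 2 * (permSection (m + 2) χ)⁻¹ := by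
        rw [hcomm.eq, ← mul_assoc, mul_inv_cancel_right]

end UVB

/-- For `n ≥ 2`, the assignment (i,i+1) ↦ ρ_i determines a
homomorphism `s : S_n →* UVB n` which is a section of ι, and `UVB n` is the internal
semidirect product of the normal subgroup `UVP n = ker ι` by `s(S_n)`; moreover the
corresponding action of `S_n` on `UVP n` permutes the indices of the generators λ_{i,j}. -/
theorem statement2 (n : ℕ) (hn : 2 ≤ n)
    (ι : UVB n →* Equiv.Perm (Fin n)) (hι : IsIota n ι) :
    ∃ s : Equiv.Perm (Fin n) →* UVB n,
      IsPermSection n s ∧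
      ι.comp s = MonoidHom.id (Equiv.Perm (Fin n)) ∧
      (MonoidHom.ker ι).Normal ∧
      Subgroup.IsComplement' ι.ker s.range ∧
      ∀ (π : Equiv.Perm (Fin n)) (i j : ℕ) (h1 : 1 ≤ i) (h2 : i ≤ n) (h3 : 1 ≤ j)
        (h4 : j ≤ n) (hij : i ≠ j),
        s π * UVB.lam n i j * (s π)⁻¹ =
          UVB.lam n ((π ⟨i - 1, by omega⟩).val + 1) ((π ⟨j - 1, by omega⟩).val + 1) := by
  obtain ⟨m, rfl⟩ : ∃ m, n = m + 2 := ⟨n - 2, by omega⟩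
  have hιs : ι.comp (UVB.permSection (m + 2)) = MonoidHom.id _ := by
    refine MonoidHom.eq_of_eqOn_denseM (mclosure_adjSwap _) ?_
    rintro _ ⟨k, hk, rfl⟩
    rw [MonoidHom.comp_apply, UVB.permSection_adjSwap hk, (hι (k + 1) (by omega) (by omega)).2,
      adjSwap_of_lt hk]
    rfl
  refine ⟨UVB.permSection (m + 2), fun k h1 h2 => ?_, hιs, ι.normal_ker,
    MonoidHom.isComplement'_ker_range hιs, fun π i j h1 h2 h3 h4 hij => ?_⟩
  · obtain ⟨k, rfl⟩ : ∃ k', k = k' + 1 := ⟨k - 1, by omega⟩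
    rw [← UVB.permSection_adjSwap (by omega), adjSwap_of_lt (by omega)]
    rfl
  · have h := UVB.permSection_conj_lam π (a := ⟨i - 1, by omega⟩) (b := ⟨j - 1, by omega⟩)
      (Fin.ne_of_val_ne fun h : i - 1 = j - 1 => hij (by omega))
    simp only [Nat.sub_add_cancel h1, Nat.sub_add_cancel h3] at h
    exact h
end

section
/- Let n ≥ 3 and, in the symmetric group S_n with adjacent transpositions τ_1,…,τ_{n−1}, define B_{i,j} = τ_{j−1}τ_{j−2}⋯τ_i for i < j and B_{i,j} = 1 otherwise. Then for all integers k, l with 1 ≤ l ≤ k ≤ n−2, one has B_{k,n−1} · B_{l,n−1} = B_{l,n−2} · B_{k+1,n−1}. -/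
/-- The adjacent transposition τ_k = (k, k+1) in the symmetric group on {1,…,n}
(1-based index, written 0-based on `Fin n`; junk value `1` unless `1 ≤ k ≤ n-1`). -/
def tau (n k : ℕ) : Equiv.Perm (Fin n) :=
  if h : 1 ≤ k ∧ k ≤ n - 1 then Equiv.swap ⟨k - 1, by omega⟩ ⟨k, by omega⟩ else 1

/-- The permutation `B_{i,j} = τ_{j−1}τ_{j−2}⋯τ_{i+1}τ_i` (the cycle (i,i+1,…,j))
for `i < j`, and `1` otherwise. -/
def BPerm (n i j : ℕ) : Equiv.Perm (Fin n) :=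
  if i < j then ((List.range' i (j - i)).reverse.map (tau n)).prod else 1

lemma tau_apply (n j : ℕ) (h1 : 1 ≤ j) (h2 : j ≤ n - 1) (y : Fin n) :
    ((tau n j) y).val = if y.val = j - 1 then j else if y.val = j then j - 1 else y.val := by
  rw [tau, dif_pos ⟨h1, h2⟩, Equiv.swap_apply_def]
  simp only [Fin.ext_iff]
  split_ifs <;> simp_all

lemma BPerm_ge (n i j : ℕ) (h : j ≤ i) : BPerm n i j = 1 := by
  rw [BPerm, if_neg (by omega)]

lemma BPerm_succ (n i j : ℕ) (h : i ≤ j) :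
    BPerm n i (j + 1) = tau n j * BPerm n i j := by
  rcases eq_or_lt_of_le h with rfl | h
  · simp [BPerm, List.range'_one]
  · rw [BPerm, BPerm, if_pos (by omega), if_pos h]
    have e : j + 1 - i = (j - i) + 1 := by omega
    have e2 : i + 1 * (j - i) = j := by omega
    rw [e, List.range'_concat, List.reverse_append, e2]
    simp

lemma BPerm_cases (n i j : ℕ) (hi : 1 ≤ i) (hj : j ≤ n) (hij : i < j) (x : Fin n) :
    ((x : ℕ) = i - 1 ∧ ((BPerm n i j) x).val = j - 1) ∨
    (i ≤ (x : ℕ) ∧ (x : ℕ) ≤ j - 1 ∧ ((BPerm n i j) x).val = (x : ℕ) - 1) ∨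
    ((x : ℕ) ≠ i - 1 ∧ ¬(i ≤ (x : ℕ) ∧ (x : ℕ) ≤ j - 1) ∧ ((BPerm n i j) x).val = (x : ℕ)) := by
  induction j with
  | zero => omega
  | succ j ih =>
    rcases Nat.lt_or_ge i j with hc | hc
    · have key := ih (by omega) hc
      rw [BPerm_succ n i j (by omega), Equiv.Perm.mul_apply,
        tau_apply n j (by omega) (by omega)]
      have hx := x.isLt
      rcases key with ⟨hA, hB⟩ | ⟨hA, hB, hC⟩ | ⟨hA, hB, hC⟩ <;>
        [rw [hB]; rw [hC]; rw [hC]] <;> split_ifs <;> omega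
    · have hij' : i = j := by omega
      subst hij'
      rw [BPerm_succ n i i (le_refl i), BPerm_ge n i i (le_refl i), mul_one,
        tau_apply n i (by omega) (by omega)]
      have hx := x.isLt
      split_ifs <;> omega

/-- In `S_n` (n ≥ 3), for all `1 ≤ l ≤ k ≤ n−2`:
`B_{k,n−1} · B_{l,n−1} = B_{l,n−2} · B_{k+1,n−1}`. -/
theorem statement16 (n : ℕ) (hn : 3 ≤ n) (k l : ℕ)
    (h1 : 1 ≤ l) (h2 : l ≤ k) (h3 : k ≤ n - 2) :
    BPerm n k (n - 1) * BPerm n l (n - 1) = BPerm n l (n - 2) * BPerm n (k + 1) (n - 1) := by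
  apply Equiv.ext
  intro x
  apply Fin.ext
  simp only [Equiv.Perm.mul_apply]
  have hx := x.isLt
  rcases Nat.lt_or_ge k (n - 2) with hk | hk
  · have c1 := BPerm_cases n l (n - 1) (by omega) (by omega) (by omega) x
    have c2 := BPerm_cases n k (n - 1) (by omega) (by omega) (by omega) ((BPerm n l (n - 1)) x)
    have c3 := BPerm_cases n (k + 1) (n - 1) (by omega) (by omega) (by omega) x
    have c4 := BPerm_cases n l (n - 2) (by omega) (by omega) (by omega) ((BPerm n (k + 1) (n - 1)) x)
    have hb1 := ((BPerm n l (n - 1)) x).isLt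
    have hb2 := ((BPerm n (k + 1) (n - 1)) x).isLt
    omega
  · have hk' : k = n - 2 := by omega
    have e : k + 1 = n - 1 := by omega
    rw [e, BPerm_ge n (n - 1) (n - 1) (le_refl _)]
    simp only [Equiv.Perm.one_apply]
    rcases Nat.lt_or_ge l (n - 2) with hl | hl
    · have c1 := BPerm_cases n l (n - 1) (by omega) (by omega) (by omega) x
      have c2 := BPerm_cases n k (n - 1) (by omega) (by omega) (by omega) ((BPerm n l (n - 1)) x)
      have c4 := BPerm_cases n l (n - 2) (by omega) (by omega) (by omega) x
      have hb1 := ((BPerm n l (n - 1)) x).isLt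
      omega
    · have hl' : l = n - 2 := by omega
      rw [hl', BPerm_ge n (n - 2) (n - 2) (le_refl _)]
      simp only [Equiv.Perm.one_apply]
      have c1 := BPerm_cases n (n - 2) (n - 1) (by omega) (by omega) (by omega) x
      have c2 := BPerm_cases n k (n - 1) (by omega) (by omega) (by omega) ((BPerm n (n - 2) (n - 1)) x)
      have hb1 := ((BPerm n (n - 2) (n - 1)) x).isLt
      omega
end
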